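/- arXiv:1911.09093 — 9 statements merged into one kernel-verified Lean document; each statement's English description precedes it below -/
import Mathlib

section
/- Let q be a prime power, t ≥ 2, and 1 ≤ s ≤ t. Consider the t × (t + C(t,2)(q−1)) matrix A over F_q whose first t columns form the identity matrix and whose remaining columns are all vectors e_i + λ e_j with 1 ≤ i < j ≤ t and λ ∈ F_q^*. Then any codeword of the code generated by the rows of A that is a linear combination of exactly s rows with nonzero coefficients has Hamming weight w_s = s + C(s,2)(q−2) + s(t−s)(q−1). -/
/-!
The codeword `uA` has entry `u c` at the identity column `e_c` and `u i + λ u j` at the column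
`e_i + λ e_j`. For a fixed pair `i < j`, the number of `λ ∈ F_q^*` with `u i + λ u j ≠ 0` is
`q - 2` if both `u i` and `u j` are nonzero (the one excluded `λ` is `-u i / u j`), `q - 1` if
exactly one of them is, and `0` otherwise. Summing over the `C(s,2)` pairs inside the support of
`u` and the `s (t - s)` pairs meeting it once gives the weight. The sum over pairs `i < j` is
evaluated by symmetrising it into a full double sum, whose rows are easy to count.
-/

open Finset

theorem Nat.two_mul_choose_two_add_self (n : ℕ) : 2 * n.choose 2 + n = n * n := by
  cases n with
  | zero => rfl
  | succ n =>
    have := Nat.add_one_mul_choose_eq n 1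
    simp only [Nat.choose_one_right] at this
    linarith

theorem sum_ite_eq_card_filter_mul_add {ι : Type*} [Fintype ι] (P : ι → Prop) [DecidablePred P]
    (a b : ℕ) :
    ∑ j, (if P j then a else b) = #{j | P j} * a + (Fintype.card ι - #{j | P j}) * b := by
  classical
  rw [sum_ite, sum_const, sum_const, smul_eq_mul, smul_eq_mul, filter_not,
    card_sdiff_of_subset (filter_subset _ _), card_univ]

theorem sum_sum_eq_two_nsmul_sum_lt_add_sum_diag {ι M : Type*} [Fintype ι] [LinearOrder ι]
    [AddCommMonoid M] (f : ι → ι → M) (hf : ∀ i j, f i j = f j i) :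
    ∑ i, ∑ j, f i j = 2 • ∑ i, ∑ j, (if i < j then f i j else 0) + ∑ i, f i i := by
  have hsplit : ∀ i j, f i j = (if i < j then f i j else 0) + (if j < i then f j i else 0) +
      (if i = j then f i j else 0) := by
    intro i j
    rcases lt_trichotomy i j with h | rfl | h
    · simp [h, h.not_gt, h.ne]
    · simp
    · simp [h, h.not_gt, h.ne', hf i j]
  calc ∑ i, ∑ j, f i j
      = ∑ i, ∑ j, ((if i < j then f i j else 0) + (if j < i then f j i else 0) +
          (if i = j then f i j else 0)) :=
        sum_congr rfl fun i _ => sum_congr rfl fun j _ => hsplit i j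
    _ = _ := by
        simp only [sum_add_distrib, sum_ite_eq, mem_univ, if_true]
        rw [sum_comm (f := fun i j => if j < i then f j i else 0), two_nsmul]

theorem sum_lt_ite_and_ite_or {ι : Type*} [Fintype ι] [LinearOrder ι] (P : ι → Prop)
    [DecidablePred P] (x y : ℕ) :
    ∑ i, ∑ j, (if i < j then (if P i ∧ P j then x else if P i ∨ P j then y else 0) else 0) =
      (#{i | P i}).choose 2 * x + #{i | P i} * (Fintype.card ι - #{i | P i}) * y := by
  set g : ι → ι → ℕ := fun i j => if P i ∧ P j then x else if P i ∨ P j then y else 0 with hg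
  have hrow : ∀ i, ∑ j, g i j = if P i then #{j | P j} * x + (Fintype.card ι - #{j | P j}) * y
      else #{j | P j} * y + (Fintype.card ι - #{j | P j}) * 0 := by
    intro i
    by_cases hi : P i
    · simp only [hg, hi, true_and, true_or, if_true]
      exact sum_ite_eq_card_filter_mul_add P x y
    · simp only [hg, hi, false_and, false_or, if_false]
      exact sum_ite_eq_card_filter_mul_add P y 0
  have hdiag : ∑ i, g i i = ∑ i, if P i then x else 0 :=
    sum_congr rfl fun i _ => by by_cases hi : P i <;> simp [hg, hi]
  have htotal := sum_sum_eq_two_nsmul_sum_lt_add_sum_diag g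
    (fun i j => by simp only [hg, and_comm, or_comm])
  simp only [sum_congr rfl fun i _ => hrow i, hdiag, sum_ite_eq_card_filter_mul_add,
    smul_eq_mul] at htotal
  have hchoose := Nat.two_mul_choose_two_add_self #{i | P i}
  change ∑ i, ∑ j, (if i < j then g i j else 0) = _
  generalize #{i | P i} = s at htotal hchoose ⊢
  generalize Fintype.card ι - s = d at htotal ⊢
  generalize ∑ i, ∑ j, (if i < j then g i j else 0) = R at htotal ⊢
  linarith [congrArg (· * x) hchoose]

theorem card_units_add_mul_ne_zero {F : Type*} [Field F] [Fintype F] [DecidableEq F] (a b : F) :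
    #{c : Fˣ | a + b * c ≠ 0} = if a ≠ 0 ∧ b ≠ 0 then Fintype.card F - 2
      else if a ≠ 0 ∨ b ≠ 0 then Fintype.card F - 1 else 0 := by
  by_cases hb : b = 0
  · by_cases ha : a = 0 <;> simp [ha, hb, Fintype.card_units]
  by_cases ha : a = 0
  · simp [ha, hb, Fintype.card_units]
  have hroot : ∀ c : Fˣ, a + b * c ≠ 0 ↔ c ≠ Units.mk0 (-a / b) (by simp [ha, hb]) := by
    intro c
    rw [Ne, Ne, Units.ext_iff, Units.val_mk0, eq_div_iff hb, eq_neg_iff_add_eq_zero, mul_comm,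
      add_comm]
  simp only [hroot, filter_ne', mem_univ, card_erase_of_mem, card_univ, Fintype.card_units, ne_eq,
    ha, hb, not_false_eq_true, and_self, if_true]
  omega

theorem hammingNorm_sum_elim {α β γ : Type*} [Fintype α] [Fintype β] [Zero γ] [DecidableEq γ]
    (f : α → γ) (g : β → γ) : hammingNorm (Sum.elim f g) = hammingNorm f + hammingNorm g := by
  simp only [hammingNorm, card_filter, Fintype.sum_sum_type, Sum.elim_inl, Sum.elim_inr]
  rfl

theorem hammingNorm_subtype_lt {ι κ γ : Type*} [Fintype ι] [LinearOrder ι] [Fintype κ] [Zero γ]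
    [DecidableEq γ] (g : ι → ι → κ → γ) :
    hammingNorm (fun p : {p : ι × ι × κ // p.1 < p.2.1} => g p.1.1 p.1.2.1 p.1.2.2) =
      ∑ i, ∑ j, if i < j then #{k | g i j k ≠ 0} else 0 := by
  rw [hammingNorm, card_filter, ← sum_subtype {p : ι × ι × κ | p.1 < p.2.1} (by simp)
    (fun p => if g p.1 p.2.1 p.2.2 ≠ 0 then 1 else 0), sum_filter]
  simp only [Fintype.sum_prod_type, card_filter, ite_sum_zero]

theorem stmt_0_general (F : Type) [Field F] [Fintype F] [DecidableEq F]
    (q : ℕ) (hq : q = Fintype.card F) (t : ℕ)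
    (A : Matrix (Fin t) (Fin t ⊕ {p : Fin t × Fin t × Fˣ // p.1 < p.2.1}) F)
    (hA1 : ∀ r c, A r (Sum.inl c) = if r = c then 1 else 0)
    (hA2 : ∀ r (p : {p : Fin t × Fin t × Fˣ // p.1 < p.2.1}),
      A r (Sum.inr p) =
        (if r = p.1.1 then 1 else 0) + (p.1.2.2 : F) * (if r = p.1.2.1 then 1 else 0))
    (s : ℕ)
    (u : Fin t → F) (hu : hammingNorm u = s) :
    hammingNorm (Matrix.vecMul u A) =
      s + Nat.choose s 2 * (q - 2) + s * (t - s) * (q - 1) := by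
  have hcodeword : Matrix.vecMul u A = Sum.elim u (fun p => u p.1.1 + u p.1.2.1 * p.1.2.2) := by
    ext (c | p)
    · simp [Matrix.vecMul, dotProduct, hA1]
    · simp [Matrix.vecMul, dotProduct, hA2, mul_add, sum_add_distrib, mul_comm]
  have hsupport : #{i | u i ≠ 0} = s := hu
  rw [hcodeword, hammingNorm_sum_elim, hu, add_assoc,
    hammingNorm_subtype_lt (fun i j (c : Fˣ) => u i + u j * c)]
  simp only [card_units_add_mul_ne_zero]
  rw [sum_lt_ite_and_ite_or (fun i => u i ≠ 0), hsupport, ← hq, Fintype.card_fin]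

/-- weight of a codeword of the code generated by `A = (I_t | B)`
which is a combination of exactly `s` rows with nonzero coefficients. -/
theorem stmt_0 (F : Type) [Field F] [Fintype F] [DecidableEq F]
    (q : ℕ) (hq : q = Fintype.card F) (t : ℕ) (ht : 2 ≤ t)
    (A : Matrix (Fin t) (Fin t ⊕ {p : Fin t × Fin t × Fˣ // p.1 < p.2.1}) F)
    (hA1 : ∀ r c, A r (Sum.inl c) = if r = c then 1 else 0)
    (hA2 : ∀ r (p : {p : Fin t × Fin t × Fˣ // p.1 < p.2.1}),
      A r (Sum.inr p) =
        (if r = p.1.1 then 1 else 0) + (p.1.2.2 : F) * (if r = p.1.2.1 then 1 else 0))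
    (s : ℕ) (hs1 : 1 ≤ s) (hs2 : s ≤ t)
    (u : Fin t → F) (hu : hammingNorm u = s) :
    hammingNorm (Matrix.vecMul u A) =
      s + Nat.choose s 2 * (q - 2) + s * (t - s) * (q - 1) :=
  stmt_0_general F q hq t A hA1 hA2 s u hu
end

section
/- Let q be a prime power and t ≥ 2. The linear code C over F_q generated by the matrix A = (I_t | B), where B has as columns all vectors e_i + λ e_j with 1 ≤ i < j ≤ t and λ ∈ F_q^*, has length C(t,2)(q−1) + t, dimension t, and (assuming q ≥ t−2) minimum Hamming distance (t−1)(q−1) + 1. -/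
/-!
Encoding `u ↦ uA` writes `u` itself in the first `t` coordinates and `u i + λ u j` at the
coordinate indexed by `(i, j, λ)`, so it is injective and the code has dimension `t`.
For the distance, fix `k` with `u k ≠ 0`. For each `j ≠ k`, the `q - 1` coordinates of the pair
`{k, j}` are all nonzero when `u j = 0`, and at most one of them vanishes when `u j ≠ 0`
(`λ ↦ u i + λ u j` is injective), in which case the systematic coordinate `j` makes up for it.
Together with the coordinate `k` this gives weight at least `(t - 1)(q - 1) + 1`, attained by
`u = e_k`.
-/

open Finset

section Hamming

variable {ι κ β : Type*} [Fintype ι] [Fintype κ] [Zero β] [DecidableEq β]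

theorem hammingNorm_eq_sum (f : ι → β) : hammingNorm f = ∑ i, if f i ≠ 0 then 1 else 0 :=
  card_filter _ _

theorem hammingNorm_sum_elim_s2 (f : ι → β) (g : κ → β) :
    hammingNorm (Sum.elim f g) = hammingNorm f + hammingNorm g := by
  simp only [hammingNorm_eq_sum, Fintype.sum_sum_type, Sum.elim_inl, Sum.elim_inr]
  rfl

theorem hammingNorm_comp_equiv (e : κ ≃ ι) (f : ι → β) :
    hammingNorm (f ∘ e) = hammingNorm f := by
  simp only [hammingNorm_eq_sum, Function.comp_apply]
  exact Fintype.sum_equiv e _ _ fun _ => rfl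

theorem hammingNorm_uncurry (f : ι → κ → β) :
    hammingNorm (Function.uncurry f) = ∑ i, hammingNorm (f i) := by
  simp only [hammingNorm_eq_sum, Fintype.sum_prod_type, Function.uncurry_apply_pair]
  rfl

theorem hammingNorm_eq_card_of_forall_ne_zero {f : ι → β} (hf : ∀ i, f i ≠ 0) :
    hammingNorm f = Fintype.card ι := by
  simp [hammingNorm, hf]

theorem card_le_hammingNorm_add_one_of_injective {f : ι → β} (hf : Function.Injective f) :
    Fintype.card ι ≤ hammingNorm f + 1 := by
  have hzero : #{i | f i = 0} ≤ 1 := card_le_one.2 fun i hi j hj => hf <| by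
    rw [(mem_filter.1 hi).2, (mem_filter.1 hj).2]
  have hsplit := card_filter_add_card_filter_not (s := univ) (fun i => f i = 0)
  rw [card_univ] at hsplit
  change _ ≤ #{i | ¬f i = 0} + 1
  omega

end Hamming

section OrderedPairs

variable {α M : Type*} [LinearOrder α] [Fintype α] [AddCommMonoid M]

theorem injOn_minMax (k : α) :
    Set.InjOn (fun j => (min k j, max k j)) (univ.erase k : Set α) := by
  intro i hi j hj hij
  simp only [coe_erase, coe_univ, Set.mem_sdiff, Set.mem_univ, Set.mem_singleton_iff,
    true_and, Prod.mk.injEq] at hi hj hij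
  rcases lt_or_gt_of_ne hi with hi | hi <;> rcases lt_or_gt_of_ne hj with hj | hj <;>
    simp_all [le_of_lt]

theorem image_minMax_subset (k : α) :
    (univ.erase k).image (fun j => (min k j, max k j)) ⊆
      ({p : α × α | p.1 < p.2} : Finset _) := by
  intro p hp
  obtain ⟨j, hj, rfl⟩ := mem_image.1 hp
  simpa [eq_comm] using (mem_erase.1 hj).1

theorem sum_erase_minMax_le [PartialOrder M] [CanonicallyOrderedAdd M] (g : α → α → M)
    (k : α) :
    ∑ j ∈ univ.erase k, g (min k j) (max k j) ≤
      ∑ p ∈ {p : α × α | p.1 < p.2}, g p.1 p.2 := by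
  rw [← sum_image (f := fun p : α × α => g p.1 p.2) (injOn_minMax k)]
  exact sum_le_sum_of_subset (image_minMax_subset k)

theorem sum_lt_eq_sum_erase_minMax (g : α → α → M) (k : α)
    (hg : ∀ i j, i ≠ k → j ≠ k → g i j = 0) :
    ∑ p ∈ {p : α × α | p.1 < p.2}, g p.1 p.2 =
      ∑ j ∈ univ.erase k, g (min k j) (max k j) := by
  rw [← sum_image (f := fun p : α × α => g p.1 p.2) (injOn_minMax k)]
  refine (sum_subset (image_minMax_subset k) fun p hp hpk => hg _ _ ?_ ?_).symm
  all_goals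
    have hlt : p.1 < p.2 := by simpa using hp
    rintro rfl
  · exact hpk (mem_image.2 ⟨p.2, mem_erase.2 ⟨hlt.ne', mem_univ _⟩, by simp [hlt.le]⟩)
  · exact hpk (mem_image.2 ⟨p.1, mem_erase.2 ⟨hlt.ne, mem_univ _⟩, by simp [hlt.le]⟩)

end OrderedPairs

def labeledPairEquiv (α β : Type*) [LT α] :
    {p : α × α × β // p.1 < p.2.1} ≃ {p : α × α // p.1 < p.2} × β where
  toFun p := (⟨(p.1.1, p.1.2.1), p.2⟩, p.1.2.2)
  invFun x := ⟨(x.1.1.1, x.1.1.2, x.2), x.1.2⟩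
  left_inv _ := rfl
  right_inv _ := rfl

theorem card_labeledPairs (α β : Type*) [LinearOrder α] [Fintype α] [Fintype β] :
    Fintype.card {p : α × α × β // p.1 < p.2.1} =
      (Fintype.card α).choose 2 * Fintype.card β := by
  rw [Fintype.card_congr (labeledPairEquiv α β), Fintype.card_prod, Fintype.card_subtype,
    Fintype.card_product_filter_lt]

def pairEncoder (F α : Type*) [Field F] [LT α] :
    (α → F) →ₗ[F] (α ⊕ {p : α × α × Fˣ // p.1 < p.2.1} → F) where
  toFun u := Sum.elim u fun p => u p.1.1 + p.1.2.2 * u p.1.2.1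
  map_add' _ _ := by ext (i | p) <;> simp; ring
  map_smul' _ _ := by ext (i | p) <;> simp; ring

section PairEncoder

variable {F α : Type*} [Field F]

theorem pairEncoder_apply [LT α] (u : α → F) :
    pairEncoder F α u = Sum.elim u fun p => u p.1.1 + p.1.2.2 * u p.1.2.1 :=
  rfl

theorem pairEncoder_injective [LT α] : Function.Injective (pairEncoder F α) :=
  fun _ _ h => funext fun i => congrFun h (Sum.inl i)

theorem finrank_range_pairEncoder [LT α] [Fintype α] :
    Module.finrank F (LinearMap.range (pairEncoder F α)) = Fintype.card α := by
  rw [LinearMap.finrank_range_of_inj pairEncoder_injective, Module.finrank_fintype_fun_eq_card]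

theorem vecMulLinear_eq_pairEncoder [LT α] [Fintype α] [DecidableEq α]
    {A : Matrix α (α ⊕ {p : α × α × Fˣ // p.1 < p.2.1}) F}
    (hA1 : ∀ r c, A r (Sum.inl c) = if r = c then 1 else 0)
    (hA2 : ∀ r (p : {p : α × α × Fˣ // p.1 < p.2.1}),
      A r (Sum.inr p) =
        (if r = p.1.1 then 1 else 0) + (p.1.2.2 : F) * (if r = p.1.2.1 then 1 else 0)) :
    A.vecMulLinear = pairEncoder F α := by
  refine LinearMap.ext fun u => funext fun c => ?_
  rcases c with i | p <;>
    simp [Matrix.vecMul, dotProduct, hA1, hA2, pairEncoder_apply, mul_add, sum_add_distrib,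
      mul_comm]

variable [LinearOrder α] [Fintype F] [DecidableEq F]

theorem card_units_le_hammingNorm_minMax (u : α → F) {k j : α} (hk : u k ≠ 0)
    (hjk : j ≠ k) :
    Fintype.card Fˣ ≤
      (hammingNorm fun c : Fˣ => u (min k j) + c * u (max k j)) + if u j ≠ 0 then 1 else 0 := by
  by_cases huj : u j = 0
  · refine (hammingNorm_eq_card_of_forall_ne_zero fun c => ?_).ge.trans (Nat.le_add_right _ _)
    rcases lt_or_gt_of_ne hjk with h | h <;> simp [h.le, huj, hk]
  · rw [if_pos huj]
    have hmax : u (max k j) ≠ 0 := by rcases max_choice k j with h | h <;> rw [h] <;> assumption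
    exact card_le_hammingNorm_add_one_of_injective fun a b hab =>
      Units.ext <| mul_right_cancel₀ hmax <| add_left_cancel hab

variable [Fintype α]

theorem hammingNorm_pairEncoder (u : α → F) :
    hammingNorm (pairEncoder F α u) =
      hammingNorm u +
        ∑ p ∈ {p : α × α | p.1 < p.2}, hammingNorm fun c : Fˣ => u p.1 + c * u p.2 := by
  rw [pairEncoder_apply, hammingNorm_sum_elim_s2,
    ← hammingNorm_comp_equiv (labeledPairEquiv α Fˣ).symm]
  exact congrArg _ <| (hammingNorm_uncurry fun (p : {p : α × α // p.1 < p.2}) (c : Fˣ) =>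
    u p.1.1 + c * u p.1.2).trans <| (sum_subtype _ (fun p => by simp)
      fun p : α × α => hammingNorm fun c : Fˣ => u p.1 + c * u p.2).symm

theorem le_hammingNorm_pairEncoder {u : α → F} (hu : u ≠ 0) :
    (Fintype.card α - 1) * Fintype.card Fˣ + 1 ≤ hammingNorm (pairEncoder F α u) := by
  obtain ⟨k, hk⟩ : ∃ k, u k ≠ 0 := Function.ne_iff.1 hu
  have hnorm : hammingNorm u = 1 + ∑ j ∈ univ.erase k, if u j ≠ 0 then 1 else 0 := by
    rw [hammingNorm_eq_sum, ← add_sum_erase _ _ (mem_univ k), if_pos hk]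
  have hlocal := sum_le_sum (s := univ.erase k) fun j hj =>
    card_units_le_hammingNorm_minMax u hk (ne_of_mem_erase hj)
  rw [sum_const, card_erase_of_mem (mem_univ k), card_univ, smul_eq_mul, sum_add_distrib] at hlocal
  have hpairs := sum_erase_minMax_le (fun i j => hammingNorm fun c : Fˣ => u i + c * u j) k
  rw [hammingNorm_pairEncoder]
  beta_reduce at hpairs
  omega

theorem hammingNorm_pairEncoder_single (k : α) :
    hammingNorm (pairEncoder F α (Pi.single k 1)) =
      (Fintype.card α - 1) * Fintype.card Fˣ + 1 := by
  set e : α → F := Pi.single k 1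
  have hpair : ∀ j ∈ univ.erase k,
      (hammingNorm fun c : Fˣ => e (min k j) + c * e (max k j)) = Fintype.card Fˣ := by
    intro j hj
    refine hammingNorm_eq_card_of_forall_ne_zero fun c => ?_
    rcases lt_or_gt_of_ne (ne_of_mem_erase hj) with h | h <;> simp [e, h.le, h.ne, h.ne']
  rw [hammingNorm_pairEncoder,
    sum_lt_eq_sum_erase_minMax (fun i j => hammingNorm fun c : Fˣ => e i + c * e j) k
      (fun i j hi hj => by simp [e, hi, hj, hammingNorm]),
    sum_congr rfl hpair, sum_const, card_erase_of_mem (mem_univ k), card_univ, smul_eq_mul]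
  simp [e, hammingNorm, Pi.single_apply, filter_eq', add_comm]

theorem isLeast_hammingNorm_range_pairEncoder [Nonempty α] :
    IsLeast {w : ℕ | ∃ c ∈ LinearMap.range (pairEncoder F α), c ≠ 0 ∧ hammingNorm c = w}
      ((Fintype.card α - 1) * Fintype.card Fˣ + 1) := by
  obtain ⟨k⟩ := ‹Nonempty α›
  refine ⟨⟨_, ⟨Pi.single k 1, rfl⟩, ?_, hammingNorm_pairEncoder_single k⟩, ?_⟩
  · exact (map_ne_zero_iff _ pairEncoder_injective).2 (by simp)
  · rintro w ⟨_, ⟨u, rfl⟩, hc, rfl⟩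
    exact le_hammingNorm_pairEncoder fun hu => hc (by rw [hu, map_zero])

end PairEncoder

theorem stmt_2_general (F : Type) [Field F] [Fintype F] [DecidableEq F]
    (q : ℕ) (hq : q = Fintype.card F) (t : ℕ) (ht : 2 ≤ t)
    (A : Matrix (Fin t) (Fin t ⊕ {p : Fin t × Fin t × Fˣ // p.1 < p.2.1}) F)
    (hA1 : ∀ r c, A r (Sum.inl c) = if r = c then 1 else 0)
    (hA2 : ∀ r (p : {p : Fin t × Fin t × Fˣ // p.1 < p.2.1}),
      A r (Sum.inr p) =
        (if r = p.1.1 then 1 else 0) + (p.1.2.2 : F) * (if r = p.1.2.1 then 1 else 0)) :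
    Fintype.card (Fin t ⊕ {p : Fin t × Fin t × Fˣ // p.1 < p.2.1})
        = Nat.choose t 2 * (q - 1) + t ∧
    Module.finrank F (LinearMap.range (Matrix.vecMulLinear A)) = t ∧
    IsLeast {w : ℕ | ∃ c ∈ LinearMap.range (Matrix.vecMulLinear A),
        c ≠ 0 ∧ hammingNorm c = w} ((t - 1) * (q - 1) + 1) := by
  have hunits : Fintype.card Fˣ = q - 1 := hq ▸ Fintype.card_units F
  have : Nonempty (Fin t) := ⟨⟨0, by omega⟩⟩
  rw [vecMulLinear_eq_pairEncoder hA1 hA2]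
  refine ⟨?_, ?_, ?_⟩
  · rw [Fintype.card_sum, card_labeledPairs, Fintype.card_fin, hunits, add_comm]
  · rw [finrank_range_pairEncoder, Fintype.card_fin]
  · simpa only [Fintype.card_fin, hunits] using
      isLeast_hammingNorm_range_pairEncoder (F := F) (α := Fin t)

/-- the code generated by `A = (I_t | B)` is a
`[C(t,2)(q-1)+t, t, (t-1)(q-1)+1]_q` code. -/
theorem stmt_2 (F : Type) [Field F] [Fintype F] [DecidableEq F]
    (q : ℕ) (hq : q = Fintype.card F) (t : ℕ) (ht : 2 ≤ t) (hqt : t - 2 ≤ q)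
    (A : Matrix (Fin t) (Fin t ⊕ {p : Fin t × Fin t × Fˣ // p.1 < p.2.1}) F)
    (hA1 : ∀ r c, A r (Sum.inl c) = if r = c then 1 else 0)
    (hA2 : ∀ r (p : {p : Fin t × Fin t × Fˣ // p.1 < p.2.1}),
      A r (Sum.inr p) =
        (if r = p.1.1 then 1 else 0) + (p.1.2.2 : F) * (if r = p.1.2.1 then 1 else 0)) :
    Fintype.card (Fin t ⊕ {p : Fin t × Fin t × Fˣ // p.1 < p.2.1})
        = Nat.choose t 2 * (q - 1) + t ∧
    Module.finrank F (LinearMap.range (Matrix.vecMulLinear A)) = t ∧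
    IsLeast {w : ℕ | ∃ c ∈ LinearMap.range (Matrix.vecMulLinear A),
        c ≠ 0 ∧ hammingNorm c = w} ((t - 1) * (q - 1) + 1) :=
  stmt_2_general F q hq t ht A hA1 hA2
end

section
/- Let q be a prime power and t ≥ 2, and let C be the code over F_q generated by A = (I_t | B) where B has all columns e_i + λ e_j, 1 ≤ i < j ≤ t, λ ∈ F_q^*. Then C is a minimal code: for any nonzero codewords w, w' with Supp(w) ⊆ Supp(w'), there exists λ ∈ F_q^* with w' = λ w. -/
/-!
Write two codewords as `x A` and `y A`. The identity columns show that `y i = 0` forces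
`x i = 0`, and the column `e_i + μ e_j` shows that `y i + μ y j = 0` forces `x i + μ x j = 0`.
Choosing `μ = -y i / y j` turns the latter into `x i y j = x j y i` for all `i, j`, so `x` and
`y` are proportional, and hence so are the codewords.
-/

open Matrix

variable {F ι : Type*} [Field F]

def IsMinimalCode {n : Type*} (C : Submodule F (n → F)) : Prop :=
  ∀ w ∈ C, ∀ w' ∈ C, w ≠ 0 → w' ≠ 0 → {i | w i ≠ 0} ⊆ {i | w' i ≠ 0} →
    ∃ lam : F, lam ≠ 0 ∧ w' = lam • w

section Proportional

variable {x y : ι → F}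

theorem mul_eq_mul_of_add_units_mul_eq_zero (hzero : ∀ i, y i = 0 → x i = 0)
    (hpair : ∀ i j, i ≠ j → ∀ μ : Fˣ, y i + μ * y j = 0 → x i + μ * x j = 0) (i j : ι) :
    x i * y j = x j * y i := by
  by_cases hij : i = j
  · rw [hij]
  by_cases hyi : y i = 0
  · simp [hyi, hzero i hyi]
  by_cases hyj : y j = 0
  · simp [hyj, hzero j hyj]
  have h := hpair i j hij (Units.mk0 (-y i / y j) (by simp [hyi, hyj]))
    (by simp only [Units.val_mk0]; field_simp; ring)
  simp only [Units.val_mk0] at h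
  field_simp at h
  linear_combination h

theorem exists_eq_smul_of_add_units_mul_eq_zero (hzero : ∀ i, y i = 0 → x i = 0)
    (hpair : ∀ i j, i ≠ j → ∀ μ : Fˣ, y i + μ * y j = 0 → x i + μ * x j = 0) (hx : x ≠ 0) :
    ∃ c : F, c ≠ 0 ∧ y = c • x := by
  obtain ⟨i, hxi⟩ := Function.ne_iff.1 hx
  have hyi : y i ≠ 0 := mt (hzero i) hxi
  refine ⟨y i / x i, div_ne_zero hyi hxi, funext fun j => ?_⟩
  have h := mul_eq_mul_of_add_units_mul_eq_zero hzero hpair i j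
  rw [Pi.smul_apply, smul_eq_mul, div_mul_eq_mul_div, eq_div_iff hxi]
  linear_combination h

end Proportional

section PairCode

variable [Fintype ι] [LinearOrder ι]

variable (F ι) in
def pairCodeMatrix : Matrix ι (ι ⊕ {p : ι × ι × Fˣ // p.1 < p.2.1}) F :=
  Matrix.of fun r => Sum.elim (fun c => if r = c then 1 else 0)
    fun p => (if r = p.1.1 then 1 else 0) + (p.1.2.2 : F) * (if r = p.1.2.1 then 1 else 0)

@[simp]
theorem vecMul_pairCodeMatrix_inl (x : ι → F) (c : ι) :
    (x ᵥ* pairCodeMatrix F ι) (Sum.inl c) = x c := by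
  simp [pairCodeMatrix, vecMul, dotProduct]

@[simp]
theorem vecMul_pairCodeMatrix_inr (x : ι → F) (p : {p : ι × ι × Fˣ // p.1 < p.2.1}) :
    (x ᵥ* pairCodeMatrix F ι) (Sum.inr p) = x p.1.1 + p.1.2.2 * x p.1.2.1 := by
  simp [pairCodeMatrix, vecMul, dotProduct, mul_add, Finset.sum_add_distrib, mul_comm]

theorem add_units_mul_eq_zero_of_vecMul_pairCodeMatrix {x y : ι → F}
    (hsub : ∀ k, (y ᵥ* pairCodeMatrix F ι) k = 0 → (x ᵥ* pairCodeMatrix F ι) k = 0)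
    {i j : ι} (hij : i ≠ j) (μ : Fˣ) (h : y i + μ * y j = 0) : x i + μ * x j = 0 := by
  rcases hij.lt_or_gt with hlt | hgt
  · simpa using hsub (Sum.inr ⟨(i, j, μ), hlt⟩) (by simpa using h)
  · have h' : y j + ↑μ⁻¹ * y i = 0 := by
      rw [Units.val_inv_eq_inv_val]
      field_simp
      linear_combination h
    have hx := hsub (Sum.inr ⟨(j, i, μ⁻¹), hgt⟩) (by simpa using h')
    simp only [vecMul_pairCodeMatrix_inr, Units.val_inv_eq_inv_val] at hx
    field_simp at hx
    linear_combination hx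

theorem isMinimalCode_pairCodeMatrix :
    IsMinimalCode (LinearMap.range (vecMulLinear (pairCodeMatrix F ι))) := by
  rintro _ ⟨x, rfl⟩ _ ⟨y, rfl⟩ hw - hsupp
  simp only [vecMulLinear_apply] at hw hsupp ⊢
  have hsub : ∀ k, (y ᵥ* pairCodeMatrix F ι) k = 0 → (x ᵥ* pairCodeMatrix F ι) k = 0 :=
    fun k hy => not_not.1 fun hx => hsupp hx hy
  have hx : x ≠ 0 := by
    rintro rfl
    exact hw (zero_vecMul _)
  obtain ⟨c, hc, rfl⟩ := exists_eq_smul_of_add_units_mul_eq_zero (x := x) (y := y)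
    (fun i hi => by simpa using hsub (Sum.inl i) (by simpa using hi))
    (fun i j hij => add_units_mul_eq_zero_of_vecMul_pairCodeMatrix hsub hij) hx
  exact ⟨c, hc, smul_vecMul c x _⟩

end PairCode

theorem stmt_4_general (F : Type) [Field F]
    (t : ℕ)
    (A : Matrix (Fin t) (Fin t ⊕ {p : Fin t × Fin t × Fˣ // p.1 < p.2.1}) F)
    (hA1 : ∀ r c, A r (Sum.inl c) = if r = c then 1 else 0)
    (hA2 : ∀ r (p : {p : Fin t × Fin t × Fˣ // p.1 < p.2.1}),
      A r (Sum.inr p) =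
        (if r = p.1.1 then 1 else 0) + (p.1.2.2 : F) * (if r = p.1.2.1 then 1 else 0)) :
    ∀ w ∈ LinearMap.range (Matrix.vecMulLinear A),
      ∀ w' ∈ LinearMap.range (Matrix.vecMulLinear A),
        w ≠ 0 → w' ≠ 0 → {i | w i ≠ 0} ⊆ {i | w' i ≠ 0} →
          ∃ lam : F, lam ≠ 0 ∧ w' = lam • w := by
  obtain rfl : A = pairCodeMatrix F (Fin t) := by
    ext r (c | p) <;> simp [pairCodeMatrix, hA1, hA2]
  exact isMinimalCode_pairCodeMatrix

/-- the code generated by `A = (I_t | B)` is minimal. -/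
theorem stmt_4 (F : Type) [Field F] [Fintype F] [DecidableEq F]
    (t : ℕ) (ht : 2 ≤ t)
    (A : Matrix (Fin t) (Fin t ⊕ {p : Fin t × Fin t × Fˣ // p.1 < p.2.1}) F)
    (hA1 : ∀ r c, A r (Sum.inl c) = if r = c then 1 else 0)
    (hA2 : ∀ r (p : {p : Fin t × Fin t × Fˣ // p.1 < p.2.1}),
      A r (Sum.inr p) =
        (if r = p.1.1 then 1 else 0) + (p.1.2.2 : F) * (if r = p.1.2.1 then 1 else 0)) :
    ∀ w ∈ LinearMap.range (Matrix.vecMulLinear A),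
      ∀ w' ∈ LinearMap.range (Matrix.vecMulLinear A),
        w ≠ 0 → w' ≠ 0 → {i | w i ≠ 0} ⊆ {i | w' i ≠ 0} →
          ∃ lam : F, lam ≠ 0 ∧ w' = lam • w :=
  stmt_4_general F t A hA1 hA2
end

section
/- Let q be a prime power, t ≥ 2, and 2 ≤ k ≤ t−1. Let D be the code over F_q generated by Ã = (I_t | B̃), where the columns of B̃ are all vectors e_{i_1} + Σ_{j=2}^k λ_{i_j} e_{i_j} with 1 ≤ i_1 < i_2 < ⋯ < i_k ≤ t and each λ_{i_j} ∈ F_q^*. Then D has length C(t,k)(q−1)^{k−1} + t, dimension t, and its minimum distance is at most 1 + C(t−1,k−1)(q−1)^{k−1}. -/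
/-!
Every nonzero vector is, in exactly one way, a nonzero scalar times a vector whose first nonzero
coordinate is `1`. Hence the `C(t, k) (q - 1)^k` vectors of weight `k` fall into classes of size
`q - 1`, one for each column of `B̃`. Because `Ã = (I_t | B̃)`, the code has dimension `t`, and the
first row of `Ã` is a codeword of weight `1` plus the number of columns of `B̃` with nonzero first
entry. Such a column has first entry `1` and is determined by its other `k - 1` nonzero entries,
which lie among the last `t - 1` coordinates.
-/

open Finset

section HammingSphere

variable {ι F : Type*} [Fintype ι] [DecidableEq ι] [Zero F] [DecidableEq F] [Fintype F]

theorem card_filter_ne_zero_eq (s : Finset ι) :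
    Nat.card {v : ι → F // ({i | v i ≠ 0} : Finset ι) = s} = (Fintype.card F - 1) ^ #s := by
  have hfiber (v : ι → F) : ({i | v i ≠ 0} : Finset ι) = s ↔ ∀ i, (v i ≠ 0 ↔ i ∈ s) := by
    simp [Finset.ext_iff]
  rw [Nat.card_congr ((Equiv.subtypeEquivRight hfiber).trans
    (Equiv.subtypePiEquivPi (p := fun i (x : F) => x ≠ 0 ↔ i ∈ s))), Nat.card_pi]
  calc ∏ i, Nat.card {x : F // x ≠ 0 ↔ i ∈ s}
      = ∏ i, if i ∈ s then Fintype.card F - 1 else 1 := by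
        congr! with i
        split_ifs with hi <;> simp [hi, Nat.card_eq_fintype_card, Fintype.card_subtype_compl]
    _ = _ := by rw [Finset.prod_ite_mem, univ_inter, prod_const]

theorem card_hammingNorm_eq (m : ℕ) :
    Nat.card {v : ι → F // hammingNorm v = m}
      = (Fintype.card ι).choose m * (Fintype.card F - 1) ^ m := by
  rw [← Nat.card_congr (Equiv.sigmaSubtypeFiberEquivSubtype
    (fun v : ι → F => ({i | v i ≠ 0} : Finset ι)) (p := fun v => hammingNorm v = m)
    (q := fun s => #s = m) fun v => Iff.rfl), Nat.card_sigma]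
  calc ∑ s : {s : Finset ι // #s = m}, Nat.card {v : ι → F // ({i | v i ≠ 0} : Finset ι) = s}
      = ∑ _s : {s : Finset ι // #s = m}, (Fintype.card F - 1) ^ m :=
        Fintype.sum_congr _ _ fun s => by rw [card_filter_ne_zero_eq, s.2]
    _ = _ := by rw [sum_const, card_univ, Fintype.card_finset_len, smul_eq_mul]

end HammingSphere

def IsNormalized {ι F : Type*} [LT ι] [Zero F] [One F] (v : ι → F) : Prop :=
  ∃ i, v i = 1 ∧ ∀ j < i, v j = 0

section Normalization

variable {ι F : Type*} [LinearOrder ι] [GroupWithZero F]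

theorem IsNormalized.eq_of_smul_eq {v w : ι → F} (hv : IsNormalized v) (hw : IsNormalized w)
    {a b : F} (ha : a ≠ 0) (hb : b ≠ 0) (h : a • v = b • w) : a = b ∧ v = w := by
  obtain ⟨i, hvi, hv0⟩ := hv
  obtain ⟨j, hwj, hw0⟩ := hw
  obtain rfl : i = j := by
    by_contra hne
    rcases lt_or_gt_of_ne hne with hlt | hlt
    · simpa [hvi, hw0 i hlt, ha] using congrFun h i
    · simpa [hwj, hv0 j hlt, hb] using (congrFun h j).symm
  obtain rfl : a = b := by simpa [hvi, hwj] using congrFun h i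
  exact ⟨rfl, funext fun j => mul_left_cancel₀ ha (congrFun h j)⟩

theorem exists_smul_isNormalized [WellFoundedLT ι] {w : ι → F} (hw : w ≠ 0) :
    ∃ a : F, a ≠ 0 ∧ ∃ v : ι → F, IsNormalized v ∧ a • v = w := by
  obtain ⟨i, hi, hmin⟩ := wellFounded_lt.has_min {i | w i ≠ 0} (Function.ne_iff.mp hw)
  refine ⟨w i, hi, ((w i)⁻¹ • w : ι → F), ⟨i, inv_mul_cancel₀ hi, fun j hj => ?_⟩,
    smul_inv_smul₀ hi w⟩
  by_contra hj0
  exact hmin j (mul_ne_zero_iff.mp hj0).2 hj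

variable [Fintype ι] [DecidableEq F] [Fintype F]

theorem card_hammingNorm_eq_mul_card_isNormalized {m : ℕ} (hm : m ≠ 0) :
    Nat.card {v : ι → F // hammingNorm v = m}
      = (Fintype.card F - 1) * Nat.card {v : ι → F // hammingNorm v = m ∧ IsNormalized v} := by
  let scale (p : Fˣ × {v : ι → F // hammingNorm v = m ∧ IsNormalized v}) :
      {v : ι → F // hammingNorm v = m} :=
    ⟨(p.1 : F) • p.2.1, by rw [hammingNorm_smul fun _ => p.1.isSMulRegular F]; exact p.2.2.1⟩
  have hscale : Function.Bijective scale := by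
    constructor
    · rintro ⟨a, v, hv⟩ ⟨b, w, hw⟩ h
      obtain ⟨hab, rfl⟩ := hv.2.eq_of_smul_eq hw.2 a.ne_zero b.ne_zero (congrArg Subtype.val h)
      obtain rfl := Units.ext hab
      rfl
    · rintro ⟨w, hw⟩
      obtain ⟨a, ha, v, hv, rfl⟩ :=
        exists_smul_isNormalized (hammingNorm_ne_zero_iff.mp (hw ▸ hm))
      rw [hammingNorm_smul fun _ => (isUnit_iff_ne_zero.mpr ha).isSMulRegular F] at hw
      exact ⟨(Units.mk0 a ha, ⟨v, hw, hv⟩), rfl⟩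
  rw [← Nat.card_eq_of_bijective scale hscale, Nat.card_prod, Nat.card_units,
    Nat.card_eq_fintype_card]

theorem card_isNormalized {m : ℕ} (hm : m ≠ 0) :
    Nat.card {v : ι → F // hammingNorm v = m ∧ IsNormalized v}
      = (Fintype.card ι).choose m * (Fintype.card F - 1) ^ (m - 1) := by
  have hcard := card_hammingNorm_eq_mul_card_isNormalized (ι := ι) (F := F) hm
  obtain ⟨m, rfl⟩ : ∃ m', m = m' + 1 := ⟨m - 1, by omega⟩
  rw [card_hammingNorm_eq, pow_succ', mul_left_comm] at hcard
  have hq : 0 < Fintype.card F - 1 := Nat.sub_pos_of_lt Fintype.one_lt_card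
  rw [Nat.add_sub_cancel, Nat.eq_of_mul_eq_mul_left hq hcard]

end Normalization

section FirstCoordinate

variable {n : ℕ} {F : Type*} [Zero F]

theorem hammingNorm_tail_add_one [DecidableEq F] {v : Fin (n + 1) → F} (h : v 0 ≠ 0) :
    hammingNorm (Fin.tail v) + 1 = hammingNorm v := by
  simp only [hammingNorm]
  rw [Fin.card_filter_univ_succ, if_pos h]
  rfl

theorem IsNormalized.apply_zero_eq_one [One F] {v : Fin (n + 1) → F} (hv : IsNormalized v)
    (h : v 0 ≠ 0) : v 0 = 1 := by
  obtain ⟨i, hi, hlt⟩ := hv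
  obtain rfl : i = 0 := by
    by_contra hne
    exact h (hlt 0 (Fin.pos_of_ne_zero hne))
  exact hi

theorem card_isNormalized_apply_zero_ne_zero_le [One F] [DecidableEq F] [Fintype F] (m : ℕ) :
    Nat.card {v : {v : Fin (n + 1) → F // hammingNorm v = m ∧ IsNormalized v} // v.1 0 ≠ 0}
      ≤ n.choose (m - 1) * (Fintype.card F - 1) ^ (m - 1) := by
  calc _ ≤ Nat.card {w : Fin n → F // hammingNorm w = m - 1} :=
        Nat.card_le_card_of_injective (fun v => ⟨Fin.tail v.1.1, by
          have := hammingNorm_tail_add_one v.2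
          have := v.1.2.1
          omega⟩) ?_
    _ = _ := by rw [card_hammingNorm_eq, Fintype.card_fin]
  rintro ⟨⟨v, hv, hvn⟩, h0⟩ ⟨⟨w, hw, hwn⟩, h0'⟩ h
  have htail : Fin.tail v = Fin.tail w := congrArg Subtype.val h
  have hhead : v 0 = w 0 := (hvn.apply_zero_eq_one h0).trans (hwn.apply_zero_eq_one h0').symm
  simp only [Subtype.mk.injEq]
  rw [← Fin.cons_self_tail v, ← Fin.cons_self_tail w, hhead, htail]

end FirstCoordinate

theorem hammingNorm_sumElim {ι κ F : Type*} [Fintype ι] [Fintype κ] [Zero F] [DecidableEq F]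
    (f : ι → F) (g : κ → F) : hammingNorm (Sum.elim f g) = hammingNorm f + hammingNorm g := by
  simp only [hammingNorm, ← Fintype.card_subtype]
  rw [Fintype.card_congr Equiv.subtypeSum, Fintype.card_sum]
  rfl

theorem hammingNorm_pi_single {ι F : Type*} [Fintype ι] [DecidableEq ι] [Zero F] [DecidableEq F]
    (i : ι) {a : F} (ha : a ≠ 0) : hammingNorm (Pi.single i a : ι → F) = 1 := by
  rw [hammingNorm, card_eq_one]
  exact ⟨i, by ext j; by_cases hj : j = i <;> simp [hj, ha]⟩

namespace Matrix

variable {m n K : Type*} [Fintype m] [DecidableEq m]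

theorem vecMul_fromCols_one [Semiring K] (B : Matrix m n K) (x : m → K) :
    x ᵥ* fromCols (1 : Matrix m m K) B = Sum.elim x (x ᵥ* B) := by
  rw [vecMul_fromCols, vecMul_one]

theorem finrank_range_vecMulLinear_fromCols_one [CommRing K] [StrongRankCondition K]
    (B : Matrix m n K) :
    Module.finrank K (LinearMap.range (fromCols (1 : Matrix m m K) B).vecMulLinear)
      = Fintype.card m := by
  have hinj : Function.Injective (fromCols (1 : Matrix m m K) B).vecMulLinear := fun x y h => by
    simpa [vecMul_fromCols_one] using congrArg (· ∘ Sum.inl) h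
  rw [LinearMap.finrank_range_of_inj hinj, Module.finrank_fintype_fun_eq_card]

theorem hammingNorm_fromCols_one_apply [Semiring K] [Nontrivial K] [DecidableEq K]
    [Fintype n] (B : Matrix m n K) (i : m) :
    hammingNorm (fromCols (1 : Matrix m m K) B i) = 1 + hammingNorm (B i) := by
  have hrow : fromCols (1 : Matrix m m K) B i = Sum.elim (Pi.single i 1) (B i) := by
    ext (j | j) <;> simp [one_apply, Pi.single_apply, eq_comm]
  rw [hrow, hammingNorm_sumElim, hammingNorm_pi_single i one_ne_zero]

end Matrix

theorem stmt_6_general (F : Type) [Field F] [Fintype F] [DecidableEq F]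
    (q : ℕ) (hq : q = Fintype.card F) (t k : ℕ) (ht : 2 ≤ t) (hk1 : 2 ≤ k)
    (A : Matrix (Fin t)
      (Fin t ⊕ {v : Fin t → F // hammingNorm v = k ∧
        ∃ i : Fin t, v i = 1 ∧ ∀ j : Fin t, j < i → v j = 0}) F)
    (hA1 : ∀ r c, A r (Sum.inl c) = if r = c then 1 else 0)
    (hA2 : ∀ r v, A r (Sum.inr v) = v.1 r) :
    Nat.card (Fin t ⊕ {v : Fin t → F // hammingNorm v = k ∧
        ∃ i : Fin t, v i = 1 ∧ ∀ j : Fin t, j < i → v j = 0})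
      = Nat.choose t k * (q - 1) ^ (k - 1) + t ∧
    Module.finrank F (LinearMap.range (Matrix.vecMulLinear A)) = t ∧
    (∃ c ∈ LinearMap.range (Matrix.vecMulLinear A), c ≠ 0 ∧
      hammingNorm c ≤ 1 + Nat.choose (t - 1) (k - 1) * (q - 1) ^ (k - 1)) := by
  obtain ⟨n, rfl⟩ : ∃ n, t = n + 1 := ⟨t - 1, by omega⟩
  subst hq
  have hA : A = Matrix.fromCols 1 (Matrix.of fun r v => v.1 r) := by
    ext r (c | v) <;> simp [hA1, hA2, Matrix.one_apply]
  refine ⟨?_, ?_, A 0, ?_, ?_, ?_⟩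
  · rw [Nat.card_sum, Nat.card_eq_fintype_card (α := Fin _), Fintype.card_fin, add_comm]
    have hcard := card_isNormalized (ι := Fin (n + 1)) (F := F) (by omega : k ≠ 0)
    rw [Fintype.card_fin] at hcard
    exact congrArg (· + _) hcard
  · rw [hA, Matrix.finrank_range_vecMulLinear_fromCols_one, Fintype.card_fin]
  · rw [range_vecMulLinear]
    exact Submodule.subset_span ⟨0, rfl⟩
  · rw [← hammingNorm_pos_iff, hA, Matrix.hammingNorm_fromCols_one_apply]
    omega
  · rw [hA, Matrix.hammingNorm_fromCols_one_apply, hammingNorm, ← Fintype.card_subtype,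
      ← Nat.card_eq_fintype_card]
    exact Nat.add_le_add_left (card_isNormalized_apply_zero_ne_zero_le k) 1

/-- parameters of the code generated by `Ã = (I_t | B̃)`, whose extra
columns are all vectors `e_{i₁} + Σ_{j=2}^{k} λ_{i_j} e_{i_j}` (i.e. all vectors of
Hamming weight `k` whose first nonzero coordinate equals `1`). -/
theorem stmt_6 (F : Type) [Field F] [Fintype F] [DecidableEq F]
    (q : ℕ) (hq : q = Fintype.card F) (t k : ℕ) (ht : 2 ≤ t) (hk1 : 2 ≤ k) (hk2 : k ≤ t - 1)
    (A : Matrix (Fin t)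
      (Fin t ⊕ {v : Fin t → F // hammingNorm v = k ∧
        ∃ i : Fin t, v i = 1 ∧ ∀ j : Fin t, j < i → v j = 0}) F)
    (hA1 : ∀ r c, A r (Sum.inl c) = if r = c then 1 else 0)
    (hA2 : ∀ r v, A r (Sum.inr v) = v.1 r) :
    Nat.card (Fin t ⊕ {v : Fin t → F // hammingNorm v = k ∧
        ∃ i : Fin t, v i = 1 ∧ ∀ j : Fin t, j < i → v j = 0})
      = Nat.choose t k * (q - 1) ^ (k - 1) + t ∧
    Module.finrank F (LinearMap.range (Matrix.vecMulLinear A)) = t ∧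
    (∃ c ∈ LinearMap.range (Matrix.vecMulLinear A), c ≠ 0 ∧
      hammingNorm c ≤ 1 + Nat.choose (t - 1) (k - 1) * (q - 1) ^ (k - 1)) :=
  stmt_6_general F q hq t k ht hk1 A hA1 hA2
end

section
/- Let q be a prime power, t ≥ 2, and ξ a generator of the cyclic group F_q^*. Let A' be the t × (t + C(t,2)(q−1) + q−2) matrix obtained from A = (I_t | B) (B having columns e_i + λ e_j, 1 ≤ i < j ≤ t, λ ∈ F_q^*) by appending q−2 columns whose first entries are ξ, ξ^2, …, ξ^{q−2} and whose other entries are 0. Then the code C' generated by A' is minimal and satisfies Property (1): every nonzero codeword contains all q elements of F_q among its coordinates. -/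
/-!
The codeword of `x` has coordinates `x i`, `x i + λ x j` (`i < j`, `λ ≠ 0`) and `x₀ ξ^m`.
Minimality: if the support of `x A` lies in that of `y A`, every relation `y i + λ y j = 0`
passes to `x`; taking `λ = -y i / y j` gives `x i y j = y i x j`, so `y` is proportional to `x`.
Property (1): `0` is a zero `x i` or `x i - (x i / x j) x j`; a nonzero `a` is
`0 + (a / x j) x j` when `x₀ = 0`, and `x₀ ξ^m` with `ξ^m = a / x₀` otherwise.
-/

open Matrix

theorem exists_pow_eq_of_lt_card {G : Type*} [Group G] [Fintype G] {g : G}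
    (hg : ∀ a : G, ∃ m : ℕ, g ^ m = a) (a : G) : ∃ e < Fintype.card G, g ^ e = a := by
  obtain ⟨m, rfl⟩ := hg a
  exact ⟨m % Fintype.card G, Nat.mod_lt _ Fintype.card_pos, pow_mod_card g m⟩

section Field

variable {F : Type*} [Field F]

theorem mul_eq_mul_of_forall_add_mul_eq_zero {a b c d : F} (hc : c ≠ 0) (hbd : b ≠ 0 → d ≠ 0)
    (h : ∀ lam : F, lam ≠ 0 → c + lam * d = 0 → a + lam * b = 0) : a * d = c * b := by
  by_cases hd : d = 0
  · simp [hd, not_imp_not.mp hbd hd]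
  · have := h (-c / d) (by simp [hc, hd]) (by field_simp; ring)
    field_simp at this
    linear_combination this

theorem exists_smul_eq_of_forall_add_mul_eq_zero {ι : Type*} {x y : ι → F} (hx : x ≠ 0)
    (hsupp : ∀ i, x i ≠ 0 → y i ≠ 0)
    (hpair : ∀ i j, i ≠ j → ∀ lam : F, lam ≠ 0 → y i + lam * y j = 0 → x i + lam * x j = 0) :
    ∃ lam : F, lam ≠ 0 ∧ y = lam • x := by
  obtain ⟨i, hxi : x i ≠ 0⟩ := Function.ne_iff.mp hx
  have hyi : y i ≠ 0 := hsupp i hxi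
  refine ⟨y i / x i, div_ne_zero hyi hxi, funext fun j => ?_⟩
  rcases eq_or_ne j i with rfl | hji
  · simp [div_mul_cancel₀ _ hxi]
  · have := mul_eq_mul_of_forall_add_mul_eq_zero hyi (hsupp j) (hpair i j hji.symm)
    simp only [Pi.smul_apply, smul_eq_mul]
    field_simp
    linear_combination this

end Field

section Columns

variable {F ι κ : Type*} [Field F] [Fintype ι] [LinearOrder ι]
  {A : Matrix ι ((ι ⊕ {p : ι × ι × Fˣ // p.1 < p.2.1}) ⊕ κ) F}

theorem vecMul_inl_inl (hA1 : ∀ r c, A r (Sum.inl (Sum.inl c)) = if r = c then 1 else 0)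
    (x : ι → F) (c : ι) : (x ᵥ* A) (Sum.inl (Sum.inl c)) = x c := by
  simp [vecMul, dotProduct, hA1]

theorem vecMul_inl_inr
    (hA2 : ∀ r (p : {p : ι × ι × Fˣ // p.1 < p.2.1}), A r (Sum.inl (Sum.inr p)) =
      (if r = p.1.1 then 1 else 0) + (p.1.2.2 : F) * (if r = p.1.2.1 then 1 else 0))
    (x : ι → F) (p : {p : ι × ι × Fˣ // p.1 < p.2.1}) :
    (x ᵥ* A) (Sum.inl (Sum.inr p)) = x p.1.1 + p.1.2.2 * x p.1.2.1 := by
  simp [vecMul, dotProduct, hA2, mul_add, Finset.sum_add_distrib, mul_comm]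

theorem eq_smul_of_support_vecMul_subset
    (hA1 : ∀ r c, A r (Sum.inl (Sum.inl c)) = if r = c then 1 else 0)
    (hA2 : ∀ r (p : {p : ι × ι × Fˣ // p.1 < p.2.1}), A r (Sum.inl (Sum.inr p)) =
      (if r = p.1.1 then 1 else 0) + (p.1.2.2 : F) * (if r = p.1.2.1 then 1 else 0))
    {x y : ι → F} (hx : x ᵥ* A ≠ 0)
    (hsub : {i | (x ᵥ* A) i ≠ 0} ⊆ {i | (y ᵥ* A) i ≠ 0}) :
    ∃ lam : F, lam ≠ 0 ∧ y ᵥ* A = lam • (x ᵥ* A) := by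
  have hpair_lt : ∀ i j, i < j → ∀ lam : F, lam ≠ 0 →
      y i + lam * y j = 0 → x i + lam * x j = 0 := by
    intro i j hij lam hlam hy
    by_contra hne
    have := hsub (a := Sum.inl (Sum.inr ⟨(i, j, Units.mk0 lam hlam), hij⟩))
    simp_all [vecMul_inl_inr hA2]
  have hpair : ∀ i j, i ≠ j → ∀ lam : F, lam ≠ 0 →
      y i + lam * y j = 0 → x i + lam * x j = 0 := by
    intro i j hij lam hlam hy
    rcases hij.lt_or_gt with hij | hji
    · exact hpair_lt i j hij lam hlam hy
    · have := hpair_lt j i hji lam⁻¹ (inv_ne_zero hlam) (by field_simp; linear_combination hy)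
      field_simp at this
      linear_combination this
  have hsupp : ∀ i, x i ≠ 0 → y i ≠ 0 := fun i h => by
    simpa [vecMul_inl_inl hA1] using hsub (a := Sum.inl (Sum.inl i)) (by simpa [vecMul_inl_inl hA1])
  obtain ⟨lam, hlam, rfl⟩ :=
    exists_smul_eq_of_forall_add_mul_eq_zero (by rintro rfl; simp at hx) hsupp hpair
  exact ⟨lam, hlam, smul_vecMul lam x A⟩

theorem exists_vecMul_eq_zero [Nontrivial ι]
    (hA1 : ∀ r c, A r (Sum.inl (Sum.inl c)) = if r = c then 1 else 0)
    (hA2 : ∀ r (p : {p : ι × ι × Fˣ // p.1 < p.2.1}), A r (Sum.inl (Sum.inr p)) =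
      (if r = p.1.1 then 1 else 0) + (p.1.2.2 : F) * (if r = p.1.2.1 then 1 else 0))
    (x : ι → F) : ∃ col, (x ᵥ* A) col = 0 := by
  by_cases h : ∃ i, x i = 0
  · obtain ⟨i, hi⟩ := h
    exact ⟨Sum.inl (Sum.inl i), by rw [vecMul_inl_inl hA1, hi]⟩
  · push Not at h
    obtain ⟨i, j, hij⟩ := exists_pair_lt ι
    have hlam : -x i / x j ≠ 0 := by simp [h i, h j]
    refine ⟨Sum.inl (Sum.inr ⟨(i, j, Units.mk0 _ hlam), hij⟩), ?_⟩
    rw [vecMul_inl_inr hA2]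
    simp [div_mul_cancel₀ _ (h j)]

theorem exists_vecMul_eq_of_apply_eq_zero
    (hA2 : ∀ r (p : {p : ι × ι × Fˣ // p.1 < p.2.1}), A r (Sum.inl (Sum.inr p)) =
      (if r = p.1.1 then 1 else 0) + (p.1.2.2 : F) * (if r = p.1.2.1 then 1 else 0))
    {x : ι → F} (hx : x ≠ 0) {i₀ : ι} (hi₀ : IsBot i₀) (h0 : x i₀ = 0) {a : F} (ha : a ≠ 0) :
    ∃ col, (x ᵥ* A) col = a := by
  obtain ⟨j, hj : x j ≠ 0⟩ := Function.ne_iff.mp hx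
  have hlt : i₀ < j := (hi₀ j).lt_of_ne (by rintro rfl; exact hj h0)
  refine ⟨Sum.inl (Sum.inr ⟨(i₀, j, Units.mk0 _ (div_ne_zero ha hj)), hlt⟩), ?_⟩
  rw [vecMul_inl_inr hA2]
  simp [h0, div_mul_cancel₀ _ hj]

end Columns

theorem exists_vecMul_eq_of_apply_ne_zero {F : Type*} [Field F] [Fintype F] {t : ℕ} {ξ : Fˣ}
    (hξ : ∀ a : Fˣ, ∃ m : ℕ, ξ ^ m = a)
    {A : Matrix (Fin t)
      ((Fin t ⊕ {p : Fin t × Fin t × Fˣ // p.1 < p.2.1}) ⊕ Fin (Fintype.card F - 2)) F}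
    (hA1 : ∀ r c, A r (Sum.inl (Sum.inl c)) = if r = c then 1 else 0)
    (hA3 : ∀ r (m : Fin (Fintype.card F - 2)),
      A r (Sum.inr m) = if (r : ℕ) = 0 then (ξ : F) ^ ((m : ℕ) + 1) else 0)
    {x : Fin t → F} {i₀ : Fin t} (hi₀ : (i₀ : ℕ) = 0) (h0 : x i₀ ≠ 0) {a : F} (ha : a ≠ 0) :
    ∃ col, (x ᵥ* A) col = a := by
  classical
  obtain ⟨e, he, hpow⟩ := exists_pow_eq_of_lt_card hξ (Units.mk0 (a / x i₀) (div_ne_zero ha h0))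
  replace hpow : (ξ : F) ^ e * x i₀ = a := by
    simpa [div_mul_cancel₀ _ h0] using congrArg (fun u : Fˣ => (u : F) * x i₀) hpow
  rw [Fintype.card_units] at he
  cases e with
  | zero => exact ⟨Sum.inl (Sum.inl i₀), by simpa [vecMul_inl_inl hA1] using hpow⟩
  | succ e =>
    refine ⟨Sum.inr ⟨e, by omega⟩, ?_⟩
    have hcol : (fun r => A r (Sum.inr ⟨e, by omega⟩)) = Pi.single i₀ ((ξ : F) ^ (e + 1)) := by
      ext r
      simp [hA3, Pi.single_apply, ← Fin.val_inj, hi₀]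
    rw [vecMul, hcol, dotProduct_single, mul_comm, hpow]

theorem range_vecMul_eq_univ {F : Type*} [Field F] [Fintype F] {t : ℕ} (ht : 2 ≤ t) {ξ : Fˣ}
    (hξ : ∀ a : Fˣ, ∃ m : ℕ, ξ ^ m = a)
    {A : Matrix (Fin t)
      ((Fin t ⊕ {p : Fin t × Fin t × Fˣ // p.1 < p.2.1}) ⊕ Fin (Fintype.card F - 2)) F}
    (hA1 : ∀ r c, A r (Sum.inl (Sum.inl c)) = if r = c then 1 else 0)
    (hA2 : ∀ r (p : {p : Fin t × Fin t × Fˣ // p.1 < p.2.1}), A r (Sum.inl (Sum.inr p)) =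
      (if r = p.1.1 then 1 else 0) + (p.1.2.2 : F) * (if r = p.1.2.1 then 1 else 0))
    (hA3 : ∀ r (m : Fin (Fintype.card F - 2)),
      A r (Sum.inr m) = if (r : ℕ) = 0 then (ξ : F) ^ ((m : ℕ) + 1) else 0)
    {x : Fin t → F} (hx : x ≠ 0) : Set.range (x ᵥ* A) = Set.univ := by
  have : Nontrivial (Fin t) := Fin.nontrivial_iff_two_le.mpr ht
  let i₀ : Fin t := ⟨0, by omega⟩
  refine Set.eq_univ_of_forall fun a => ?_
  rcases eq_or_ne a 0 with rfl | ha
  · exact exists_vecMul_eq_zero hA1 hA2 x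
  rcases eq_or_ne (x i₀) 0 with h0 | h0
  · exact exists_vecMul_eq_of_apply_eq_zero hA2 hx (fun j => Fin.mk_le_mk.mpr j.val.zero_le) h0 ha
  · exact exists_vecMul_eq_of_apply_ne_zero hξ hA1 hA3 rfl h0 ha

theorem stmt_14_general (F : Type) [Field F] [Fintype F]
    (q : ℕ) (hq : q = Fintype.card F) (t : ℕ) (ht : 2 ≤ t)
    (ξ : Fˣ) (hξ : ∀ a : Fˣ, ∃ m : ℕ, ξ ^ m = a)
    (A : Matrix (Fin t)
      ((Fin t ⊕ {p : Fin t × Fin t × Fˣ // p.1 < p.2.1}) ⊕ Fin (q - 2)) F)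
    (hA1 : ∀ r c, A r (Sum.inl (Sum.inl c)) = if r = c then 1 else 0)
    (hA2 : ∀ r (p : {p : Fin t × Fin t × Fˣ // p.1 < p.2.1}),
      A r (Sum.inl (Sum.inr p)) =
        (if r = p.1.1 then 1 else 0) + (p.1.2.2 : F) * (if r = p.1.2.1 then 1 else 0))
    (hA3 : ∀ r (m : Fin (q - 2)),
      A r (Sum.inr m) = if (r : ℕ) = 0 then (ξ : F) ^ ((m : ℕ) + 1) else 0) :
    (∀ c ∈ LinearMap.range (Matrix.vecMulLinear A),
      ∀ c' ∈ LinearMap.range (Matrix.vecMulLinear A),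
        c ≠ 0 → c' ≠ 0 → {i | c i ≠ 0} ⊆ {i | c' i ≠ 0} →
          ∃ lam : F, lam ≠ 0 ∧ c' = lam • c) ∧
    (∀ w ∈ LinearMap.range (Matrix.vecMulLinear A),
      w ≠ 0 → Set.range w = Set.univ) := by
  subst hq
  refine ⟨?_, ?_⟩
  · rintro _ ⟨x, rfl⟩ _ ⟨y, rfl⟩ hc - hsub
    exact eq_smul_of_support_vecMul_subset hA1 hA2 hc hsub
  · rintro _ ⟨x, rfl⟩ hw
    exact range_vecMul_eq_univ ht hξ hA1 hA2 hA3 (by rintro rfl; simp at hw)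

/-- appending to `A = (I_t | B)` the `q-2` columns
`(ξ^m, 0, …, 0)ᵀ`, `m = 1, …, q-2`, gives a minimal code satisfying Property (1). -/
theorem stmt_14 (F : Type) [Field F] [Fintype F] [DecidableEq F]
    (q : ℕ) (hq : q = Fintype.card F) (t : ℕ) (ht : 2 ≤ t)
    (ξ : Fˣ) (hξ : ∀ a : Fˣ, ∃ m : ℕ, ξ ^ m = a)
    (A : Matrix (Fin t)
      ((Fin t ⊕ {p : Fin t × Fin t × Fˣ // p.1 < p.2.1}) ⊕ Fin (q - 2)) F)
    (hA1 : ∀ r c, A r (Sum.inl (Sum.inl c)) = if r = c then 1 else 0)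
    (hA2 : ∀ r (p : {p : Fin t × Fin t × Fˣ // p.1 < p.2.1}),
      A r (Sum.inl (Sum.inr p)) =
        (if r = p.1.1 then 1 else 0) + (p.1.2.2 : F) * (if r = p.1.2.1 then 1 else 0))
    (hA3 : ∀ r (m : Fin (q - 2)),
      A r (Sum.inr m) = if (r : ℕ) = 0 then (ξ : F) ^ ((m : ℕ) + 1) else 0) :
    (∀ c ∈ LinearMap.range (Matrix.vecMulLinear A),
      ∀ c' ∈ LinearMap.range (Matrix.vecMulLinear A),
        c ≠ 0 → c' ≠ 0 → {i | c i ≠ 0} ⊆ {i | c' i ≠ 0} →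
          ∃ lam : F, lam ≠ 0 ∧ c' = lam • c) ∧
    (∀ w ∈ LinearMap.range (Matrix.vecMulLinear A),
      w ≠ 0 → Set.range w = Set.univ) :=
  stmt_14_general F q hq t ht ξ hξ A hA1 hA2 hA3
end

section
/- Let q be an odd prime power, n > 3, k ∈ {2,…,n−2} with k ≥ q, and α_1,…,α_k ∈ F_q^* such that {α_i : 1 ≤ i ≤ k} ∪ {0} = F_q. Define f: F_q^n → F_q by f(x) = α_i if wt(x) = i ≤ k and f(x) = 0 if wt(x) > k or x = 0. Then for every (u,v) ∈ F_q × F_q^n with (u,v) ≠ (0,0), the codeword c(u,v) = (u f(x) + v·x)_{x ∈ F_q^n \ {0}} takes all q values of F_q among its coordinates. -/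
/-!
If `v = 0`, the coordinate `u f(x)` of `c(u, 0)` only depends on the weight of `x`, and every
weight in `1, …, n` is attained, so the values `u α_i` (which cover `F_q^*`) and `0` (weight
`n > k`) all occur. If `v ≠ 0`, fix `v_j ≠ 0` and take `x` equal to `1` off `j`: adjusting
`x_j` makes `v·x` take any value, while `wt(x) ≥ n - 1 > k` forces `f(x) = 0`.
-/

open Finset Matrix

section

variable {ι F : Type*} [Fintype ι]

theorem exists_hammingNorm_eq [Zero F] [Nontrivial F] [DecidableEq F] {i : ℕ}
    (hi : i ≤ Fintype.card ι) : ∃ x : ι → F, hammingNorm x = i := by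
  classical
  obtain ⟨s, -, hs⟩ := exists_subset_card_eq (s := (univ : Finset ι)) hi
  obtain ⟨a, ha⟩ := exists_ne (0 : F)
  refine ⟨fun j => if j ∈ s then a else 0, ?_⟩
  simp [hammingNorm, ha, hs]

theorem exists_dotProduct_eq_and_card_sub_one_le_hammingNorm [Field F] [DecidableEq F]
    {v : ι → F} (hv : v ≠ 0) (b : F) :
    ∃ x : ι → F, v ⬝ᵥ x = b ∧ Fintype.card ι - 1 ≤ hammingNorm x := by
  classical
  obtain ⟨j, hj⟩ := Function.ne_iff.mp hv
  refine ⟨1 + Pi.single j ((b - ∑ i, v i) / v j), ?_, ?_⟩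
  · rw [dotProduct_add, dotProduct_one, dotProduct_single, mul_div_cancel₀ _ hj]
    ring
  · rw [← card_univ, ← card_erase_of_mem (mem_univ j)]
    refine card_le_card fun i hi => ?_
    simp [Pi.single_apply, (mem_erase.mp hi).1]

end

theorem stmt_15_general (F : Type) [Field F] [DecidableEq F]
    (n k : ℕ) (hn : 3 < n) (hk2 : k ≤ n - 2)
    (α : ℕ → F)
    (hcover : ∀ b : F, b ≠ 0 → ∃ i : ℕ, 1 ≤ i ∧ i ≤ k ∧ α i = b)
    (f : (Fin n → F) → F)
    (hf : ∀ x : Fin n → F,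
      f x = if 1 ≤ hammingNorm x ∧ hammingNorm x ≤ k then α (hammingNorm x) else 0) :
    ∀ (u : F) (v : Fin n → F), ¬(u = 0 ∧ v = 0) →
      ∀ b : F, ∃ x : Fin n → F, x ≠ 0 ∧ u * f x + ∑ i, v i * x i = b := by
  intro u v huv b
  rcases eq_or_ne v 0 with rfl | hv
  · have hu : u ≠ 0 := fun h => huv ⟨h, rfl⟩
    by_cases hb : b = 0
    · obtain ⟨x, hx⟩ := exists_hammingNorm_eq (ι := Fin n) (F := F) (Fintype.card_fin n).ge
      refine ⟨x, hammingNorm_pos_iff.mp (by omega), ?_⟩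
      rw [hf, if_neg (by omega)]
      simp [hb]
    · obtain ⟨i, hi1, hik, hαi⟩ := hcover (b / u) (div_ne_zero hb hu)
      obtain ⟨x, hx⟩ := exists_hammingNorm_eq (ι := Fin n) (F := F) (i := i)
        (by rw [Fintype.card_fin]; omega)
      refine ⟨x, hammingNorm_pos_iff.mp (by omega), ?_⟩
      rw [hf, hx, if_pos ⟨hi1, hik⟩, hαi]
      simp [mul_div_cancel₀ b hu]
  · obtain ⟨x, hvx, hx⟩ := exists_dotProduct_eq_and_card_sub_one_le_hammingNorm hv b
    rw [Fintype.card_fin] at hx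
    refine ⟨x, hammingNorm_pos_iff.mp (by omega), ?_⟩
    rw [hf, if_neg (by omega), mul_zero, zero_add]
    exact hvx

/-- for `q` odd, `k ≥ q`, and `{α_i} ∪ {0} = F_q`, every nonzero codeword
`c(u,v) = (u f(x) + v·x)_{x ≠ 0}` of the code `C_f` takes all `q` values of `F_q` among
its coordinates. -/
theorem stmt_15 (F : Type) [Field F] [Fintype F] [DecidableEq F]
    (q : ℕ) (hq : q = Fintype.card F) (hodd : Odd q)
    (n k : ℕ) (hn : 3 < n) (hk1 : 2 ≤ k) (hk2 : k ≤ n - 2) (hkq : q ≤ k)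
    (α : ℕ → F) (hα : ∀ i : ℕ, 1 ≤ i → i ≤ k → α i ≠ 0)
    (hcover : ∀ b : F, b ≠ 0 → ∃ i : ℕ, 1 ≤ i ∧ i ≤ k ∧ α i = b)
    (f : (Fin n → F) → F)
    (hf : ∀ x : Fin n → F,
      f x = if 1 ≤ hammingNorm x ∧ hammingNorm x ≤ k then α (hammingNorm x) else 0) :
    ∀ (u : F) (v : Fin n → F), ¬(u = 0 ∧ v = 0) →
      ∀ b : F, ∃ x : Fin n → F, x ≠ 0 ∧ u * f x + ∑ i, v i * x i = b :=
  stmt_15_general F n k hn hk2 α hcover f hf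
end

section
/- Let q be a prime power, r, k ≥ 2 integers, n = rk, and define g: F_q^n → F_q by g(x_1,…,x_n) = Σ_{j=0}^{k−1} x_{jr+1} x_{jr+2} ⋯ x_{jr+r}. Then for every (u,v) ∈ F_q × F_q^n with (u,v) ≠ (0,0), the vector c(u,v) = (u g(x) + v·x)_{x ∈ F_q^n \ {0}} takes all q values of F_q among its coordinates. -/
/-! If `u = 0`, then `v ≠ 0` and a nonzero linear form on a space of dimension at least two takes
every value at a nonzero vector. If `u ≠ 0`, take `x` equal to `1` everywhere except at two
coordinates `s, t` of one block: then `u g(x) + v·x = u s t + α s + β t + γ`, and fixing `s` with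
`u s + β ≠ 0` this is a nonconstant affine function of `t`. Another block is all ones, so `x ≠ 0`. -/

open Matrix Function

section

variable {F : Type} [Field F] {ι κ : Type} [DecidableEq ι] [DecidableEq κ]

theorem exists_mul_mul_add_eq {u : F} (hu : u ≠ 0) (α β γ b : F) :
    ∃ s t, u * (s * t) + α * s + β * t + γ = b := by
  refine ⟨(1 - β) / u, b - γ - α * ((1 - β) / u), ?_⟩
  field_simp
  ring

variable [Fintype ι]

theorem exists_ne_zero_dotProduct_eq [Nontrivial ι] {v : ι → F} (hv : v ≠ 0) (b : F) :
    ∃ x ≠ 0, v ⬝ᵥ x = b := by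
  obtain ⟨p0, hp0⟩ : ∃ p, v p ≠ 0 := Function.ne_iff.mp hv
  obtain ⟨p1, hp1⟩ := exists_ne p0
  refine ⟨Pi.single p1 1 + Pi.single p0 ((b - v p1) / v p0), fun h => ?_, ?_⟩
  · simpa [hp1] using congrFun h p1
  · rw [dotProduct_add, dotProduct_single, dotProduct_single, mul_div_cancel₀ _ hp0]
    ring

theorem dotProduct_update_update_one {p0 p1 : ι} (h : p0 ≠ p1) (v : ι → F) (s t : F) :
    v ⬝ᵥ update (update 1 p0 s) p1 t = v ⬝ᵥ 1 + v p0 * (s - 1) + v p1 * (t - 1) := by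
  have hx : update (update (1 : ι → F) p0 s) p1 t =
      1 + Pi.single p0 (s - 1) + Pi.single p1 (t - 1) := by
    ext p
    simp only [update_apply, Pi.add_apply, Pi.single_apply, Pi.one_apply]
    split_ifs <;> simp_all
  rw [hx, dotProduct_add, dotProduct_add, dotProduct_single, dotProduct_single]

omit [Fintype ι] in
theorem prod_update_update_one_apply [Fintype κ] (i0 : ι) {l0 l1 : κ} (h : l0 ≠ l1)
    (s t : F) (j : ι) :
    ∏ l, update (update (1 : ι × κ → F) (i0, l0) s) (i0, l1) t (j, l) =
      if j = i0 then s * t else 1 := by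
  split_ifs with hj
  · subst hj
    rw [Fintype.prod_eq_mul l0 l1 h fun l hl => by simp [hl.1, hl.2]]
    simp [h]
  · simp [hj]

theorem sum_prod_update_update_one [Fintype κ] (i0 : ι) {l0 l1 : κ} (h : l0 ≠ l1) (s t : F) :
    ∑ j, ∏ l, update (update (1 : ι × κ → F) (i0, l0) s) (i0, l1) t (j, l) =
      s * t + (Fintype.card ι - 1 : F) := by
  simp_rw [prod_update_update_one_apply i0 h]
  rw [← Finset.add_sum_erase _ _ (Finset.mem_univ i0), if_pos rfl,
    Finset.sum_congr rfl fun j hj => if_neg (Finset.ne_of_mem_erase hj)]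
  simp [Finset.card_erase_of_mem, Nat.cast_pred (Fintype.card_pos_iff.mpr ⟨i0⟩)]

theorem exists_ne_zero_mul_sum_prod_add_dotProduct_eq [Fintype κ] [Nontrivial ι]
    [Nontrivial κ] {u : F} (hu : u ≠ 0) (v : ι × κ → F) (b : F) :
    ∃ x ≠ 0, u * ∑ j, ∏ l, x (j, l) + v ⬝ᵥ x = b := by
  obtain ⟨i0, i1, hi⟩ := exists_pair_ne ι
  obtain ⟨l0, l1, hl⟩ := exists_pair_ne κ
  obtain ⟨s, t, hst⟩ := exists_mul_mul_add_eq hu (v (i0, l0)) (v (i0, l1))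
    (u * (Fintype.card ι - 1) + v ⬝ᵥ 1 - v (i0, l0) - v (i0, l1)) b
  refine ⟨update (update 1 (i0, l0) s) (i0, l1) t, fun h => ?_, ?_⟩
  · simpa [hi.symm] using congrFun h (i1, l0)
  · rw [sum_prod_update_update_one i0 hl, dotProduct_update_update_one (by simpa using hl)]
    linear_combination hst

end

theorem stmt_16_general (F : Type) [Field F]
    (r k : ℕ) (hr : 2 ≤ r) (hk : 2 ≤ k) :
    ∀ (u : F) (v : Fin k × Fin r → F), ¬(u = 0 ∧ v = 0) →
      ∀ b : F, ∃ x : Fin k × Fin r → F, x ≠ 0 ∧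
        u * (∑ j : Fin k, ∏ l : Fin r, x (j, l)) + ∑ p : Fin k × Fin r, v p * x p = b := by
  have : Nontrivial (Fin r) := Fin.nontrivial_iff_two_le.mpr hr
  have : Nontrivial (Fin k) := Fin.nontrivial_iff_two_le.mpr hk
  intro u v huv b
  rcases eq_or_ne u 0 with rfl | hu
  · obtain ⟨x, hx, hvx⟩ := exists_ne_zero_dotProduct_eq (fun hv => huv ⟨rfl, hv⟩) b
    exact ⟨x, hx, by rw [zero_mul, zero_add]; exact hvx⟩
  · exact exists_ne_zero_mul_sum_prod_add_dotProduct_eq hu v b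

/-- for `g(x) = Σ_{j=0}^{k-1} x_{jr+1} ⋯ x_{jr+r}` (coordinates grouped in
`k` blocks of size `r`), every nonzero codeword `c(u,v) = (u g(x) + v·x)_{x ≠ 0}` takes
all `q` values of `F_q` among its coordinates. -/
theorem stmt_16 (F : Type) [Field F] [Fintype F] [DecidableEq F]
    (r k : ℕ) (hr : 2 ≤ r) (hk : 2 ≤ k) :
    ∀ (u : F) (v : Fin k × Fin r → F), ¬(u = 0 ∧ v = 0) →
      ∀ b : F, ∃ x : Fin k × Fin r → F, x ≠ 0 ∧
        u * (∑ j : Fin k, ∏ l : Fin r, x (j, l)) + ∑ p : Fin k × Fin r, v p * x p = b :=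
  stmt_16_general F r k hr hk
end

section
/- Let C_1 be a minimal [n_1, k_1]_q code and C_2 a minimal [n_2, k_2]_q code. Then the tensor product code C_1 ⊗ C_2 (spanned by all vectors (c_1)_i (c_2)_j indexed by pairs (i,j), for c_1 ∈ C_1, c_2 ∈ C_2) is a minimal [n_1 n_2, k_1 k_2]_q code. -/
/-!
Every column of a word of `C₁ ⊗ C₂` lies in `C₁` and every row in `C₂`. If `supp M ⊆ supp M'`,
minimality makes each nonzero column (row) of `M'` a multiple of the corresponding column (row)
of `M`. In a minimal code any two nonzero codewords have intersecting supports, so any two nonzero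
columns of `M` meet in a row where both are nonzero; through that row all these scalars coincide.
The dimension count comes from the isomorphism `F^ι ⊗ F^κ ≃ F^(ι × κ)`, which restricts to an
injection of `C₁ ⊗ C₂` onto the tensor code since everything is flat over a field.
-/

open scoped TensorProduct

namespace LinearCode

variable {F ι κ : Type*} [Field F]

def IsMinimalCode (C : Submodule F (ι → F)) : Prop :=
  ∀ c ∈ C, ∀ c' ∈ C, c ≠ 0 → c' ≠ 0 →
    {i | c i ≠ 0} ⊆ {i | c' i ≠ 0} → ∃ lam : F, lam ≠ 0 ∧ c' = lam • c

def tensorCode (C₁ : Submodule F (ι → F)) (C₂ : Submodule F (κ → F)) :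
    Submodule F (ι × κ → F) :=
  Submodule.span F {w | ∃ c₁ ∈ C₁, ∃ c₂ ∈ C₂, w = fun p : ι × κ => c₁ p.1 * c₂ p.2}

namespace IsMinimalCode

variable {C : Submodule F (ι → F)} {c c' : ι → F}

theorem eq_smul_of_apply_eq (hC : IsMinimalCode C) (hc : c ∈ C) (hc' : c' ∈ C)
    (hsupp : {i | c i ≠ 0} ⊆ {i | c' i ≠ 0}) {i : ι} (hi : c i ≠ 0) {a : F}
    (ha : c' i = a * c i) : c' = a • c := by
  have hc0 : c ≠ 0 := fun h => hi (congrFun h i)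
  have hc'0 : c' ≠ 0 := fun h => hsupp hi (congrFun h i)
  obtain ⟨lam, -, rfl⟩ := hC c hc c' hc' hc0 hc'0 hsupp
  rw [Pi.smul_apply, smul_eq_mul] at ha
  rw [mul_right_cancel₀ hi ha]

theorem exists_apply_ne_zero_and_apply_ne_zero (hC : IsMinimalCode C) (hc : c ∈ C)
    (hc' : c' ∈ C) (hc0 : c ≠ 0) (hc'0 : c' ≠ 0) : ∃ i, c i ≠ 0 ∧ c' i ≠ 0 := by
  by_contra! hdisj
  have hsum : ∀ i, c i ≠ 0 → (c + c') i = c i := fun i hi => by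
    rw [Pi.add_apply, hdisj i hi, add_zero]
  obtain ⟨i, hi⟩ := Function.ne_iff.mp hc0
  -- disjoint supports make `c` and `c + c'` agree on the support of `c`, forcing `c' = 0`
  have h : c + c' = (1 : F) • c :=
    hC.eq_smul_of_apply_eq hc (C.add_mem hc hc')
      (fun j hj => show (c + c') j ≠ 0 by rwa [hsum j hj]) hi (by rw [hsum i hi, one_mul])
  exact hc'0 (by simpa using h)

end IsMinimalCode

section TensorCode

variable {C₁ : Submodule F (ι → F)} {C₂ : Submodule F (κ → F)} {M : ι × κ → F}

theorem col_mem_of_mem_tensorCode (hM : M ∈ tensorCode C₁ C₂) (j : κ) :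
    (fun i => M (i, j)) ∈ C₁ := by
  refine (Submodule.span_le (p := C₁.comap (LinearMap.funLeft F F fun i => (i, j)))).mpr ?_ hM
  rintro _ ⟨c₁, hc₁, c₂, -, rfl⟩
  have : (fun i => c₁ i * c₂ j) = c₂ j • c₁ := funext fun i => mul_comm _ _
  change (fun i => c₁ i * c₂ j) ∈ C₁
  exact this ▸ C₁.smul_mem (c₂ j) hc₁

theorem row_mem_of_mem_tensorCode (hM : M ∈ tensorCode C₁ C₂) (i : ι) :
    (fun j => M (i, j)) ∈ C₂ := by
  refine (Submodule.span_le (p := C₂.comap (LinearMap.funLeft F F fun j => (i, j)))).mpr ?_ hM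
  rintro _ ⟨c₁, -, c₂, hc₂, rfl⟩
  exact C₂.smul_mem (c₁ i) hc₂

theorem IsMinimalCode.tensorCode (h₁ : IsMinimalCode C₁) (h₂ : IsMinimalCode C₂) :
    IsMinimalCode (tensorCode C₁ C₂) := by
  intro M hM M' hM' hM0 _ hsupp
  have col_eq {i j a} (hij : M (i, j) ≠ 0) (ha : M' (i, j) = a * M (i, j)) (k : ι) :
      M' (k, j) = a * M (k, j) :=
    congrFun (h₁.eq_smul_of_apply_eq (col_mem_of_mem_tensorCode hM j)
      (col_mem_of_mem_tensorCode hM' j) (fun _ hk => hsupp hk) hij ha) k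
  have row_eq {i j a} (hij : M (i, j) ≠ 0) (ha : M' (i, j) = a * M (i, j)) (k : κ) :
      M' (i, k) = a * M (i, k) :=
    congrFun (h₂.eq_smul_of_apply_eq (row_mem_of_mem_tensorCode hM i)
      (row_mem_of_mem_tensorCode hM' i) (fun _ hk => hsupp hk) hij ha) k
  obtain ⟨⟨i₀, j₀⟩, h₀⟩ : ∃ p, M p ≠ 0 := Function.ne_iff.mp hM0
  have on_col₀ := col_eq h₀ (div_mul_cancel₀ _ h₀).symm
  have on_row {i} (hi : M (i, j₀) ≠ 0) := row_eq hi (on_col₀ i)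
  have meets_col₀ {N : ι × κ → F} (hN : N ∈ LinearCode.tensorCode C₁ C₂) {j}
      (hj : (fun i => N (i, j)) ≠ 0) : ∃ i, N (i, j) ≠ 0 ∧ M (i, j₀) ≠ 0 :=
    h₁.exists_apply_ne_zero_and_apply_ne_zero (col_mem_of_mem_tensorCode hN j)
      (col_mem_of_mem_tensorCode hM j₀) hj (fun h => h₀ (congrFun h i₀))
  refine ⟨M' (i₀, j₀) / M (i₀, j₀), div_ne_zero (hsupp h₀) h₀, funext fun ⟨i, j⟩ => ?_⟩
  rw [Pi.smul_apply, smul_eq_mul]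
  by_cases hcol : (fun k => M (k, j)) = 0
  · have hMij : M (i, j) = 0 := congrFun hcol i
    rw [hMij, mul_zero]
    by_contra hne
    obtain ⟨i₁, hi₁, hi₁'⟩ := meets_col₀ hM' (j := j) fun h => hne (congrFun h i)
    exact hi₁ (by rw [on_row hi₁' j, congrFun hcol i₁, Pi.zero_apply, mul_zero])
  · obtain ⟨i₁, hi₁, hi₁'⟩ := meets_col₀ hM hcol
    exact col_eq hi₁ (on_row hi₁' j) i

end TensorCode

section Dimension

variable (F ι κ) [Finite ι] [Finite κ]

noncomputable def piTensorPiEquiv : (ι → F) ⊗[F] (κ → F) ≃ₗ[F] (ι × κ → F) :=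
  TensorProduct.congr (Finsupp.linearEquivFunOnFinite F F ι).symm
      (Finsupp.linearEquivFunOnFinite F F κ).symm ≪≫ₗ
    finsuppTensorFinsupp' F ι κ ≪≫ₗ Finsupp.linearEquivFunOnFinite F F (ι × κ)

variable {F ι κ}

@[simp]
theorem piTensorPiEquiv_tmul (x : ι → F) (y : κ → F) :
    piTensorPiEquiv F ι κ (x ⊗ₜ y) = fun p => x p.1 * y p.2 := by
  ext ⟨i, j⟩
  simp [piTensorPiEquiv, finsuppTensorFinsupp'_apply_apply]

theorem range_piTensorPiEquiv_comp_mapIncl (C₁ : Submodule F (ι → F))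
    (C₂ : Submodule F (κ → F)) :
    LinearMap.range ((piTensorPiEquiv F ι κ).toLinearMap ∘ₗ TensorProduct.mapIncl C₁ C₂) =
      tensorCode C₁ C₂ := by
  rw [LinearMap.range_eq_map, ← TensorProduct.span_tmul_eq_top, Submodule.map_span, tensorCode]
  congr 1
  ext w
  constructor
  · rintro ⟨_, ⟨x, y, rfl⟩, rfl⟩
    exact ⟨x, x.2, y, y.2, by simp⟩
  · rintro ⟨c₁, h₁, c₂, h₂, rfl⟩
    exact ⟨⟨c₁, h₁⟩ ⊗ₜ ⟨c₂, h₂⟩, ⟨_, _, rfl⟩, by simp⟩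

theorem finrank_tensorCode (C₁ : Submodule F (ι → F)) (C₂ : Submodule F (κ → F)) :
    Module.finrank F (tensorCode C₁ C₂) = Module.finrank F C₁ * Module.finrank F C₂ := by
  have hinj : Function.Injective
      ((piTensorPiEquiv F ι κ).toLinearMap ∘ₗ TensorProduct.mapIncl C₁ C₂) :=
    (piTensorPiEquiv F ι κ).injective.comp
      (Module.Flat.tensorProduct_mapIncl_injective_of_right C₁ C₂)
  rw [← range_piTensorPiEquiv_comp_mapIncl, LinearMap.finrank_range_of_inj hinj,
    Module.finrank_tensorProduct]

end Dimension

end LinearCode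

theorem stmt_17_general (F : Type) [Field F]
    (n₁ n₂ k₁ k₂ : ℕ)
    (C₁ : Submodule F (Fin n₁ → F)) (C₂ : Submodule F (Fin n₂ → F))
    (hk₁ : Module.finrank F C₁ = k₁) (hk₂ : Module.finrank F C₂ = k₂)
    (hmin₁ : ∀ c ∈ C₁, ∀ c' ∈ C₁, c ≠ 0 → c' ≠ 0 →
      {i | c i ≠ 0} ⊆ {i | c' i ≠ 0} → ∃ lam : F, lam ≠ 0 ∧ c' = lam • c)
    (hmin₂ : ∀ c ∈ C₂, ∀ c' ∈ C₂, c ≠ 0 → c' ≠ 0 →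
      {i | c i ≠ 0} ⊆ {i | c' i ≠ 0} → ∃ lam : F, lam ≠ 0 ∧ c' = lam • c)
    (D : Submodule F (Fin n₁ × Fin n₂ → F))
    (hD : D = Submodule.span F {w | ∃ c₁ ∈ C₁, ∃ c₂ ∈ C₂,
      w = fun p : Fin n₁ × Fin n₂ => c₁ p.1 * c₂ p.2}) :
    Module.finrank F D = k₁ * k₂ ∧
    (∀ c ∈ D, ∀ c' ∈ D, c ≠ 0 → c' ≠ 0 →
      {i | c i ≠ 0} ⊆ {i | c' i ≠ 0} → ∃ lam : F, lam ≠ 0 ∧ c' = lam • c) := by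
  subst hD hk₁ hk₂
  exact ⟨LinearCode.finrank_tensorCode C₁ C₂, LinearCode.IsMinimalCode.tensorCode hmin₁ hmin₂⟩

/-- the tensor product of a minimal `[n₁,k₁]_q` code and a minimal
`[n₂,k₂]_q` code is a minimal `[n₁n₂, k₁k₂]_q` code. -/
theorem stmt_17 (F : Type) [Field F] [Fintype F] [DecidableEq F]
    (n₁ n₂ k₁ k₂ : ℕ)
    (C₁ : Submodule F (Fin n₁ → F)) (C₂ : Submodule F (Fin n₂ → F))
    (hk₁ : Module.finrank F C₁ = k₁) (hk₂ : Module.finrank F C₂ = k₂)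
    (hmin₁ : ∀ c ∈ C₁, ∀ c' ∈ C₁, c ≠ 0 → c' ≠ 0 →
      {i | c i ≠ 0} ⊆ {i | c' i ≠ 0} → ∃ lam : F, lam ≠ 0 ∧ c' = lam • c)
    (hmin₂ : ∀ c ∈ C₂, ∀ c' ∈ C₂, c ≠ 0 → c' ≠ 0 →
      {i | c i ≠ 0} ⊆ {i | c' i ≠ 0} → ∃ lam : F, lam ≠ 0 ∧ c' = lam • c)
    (D : Submodule F (Fin n₁ × Fin n₂ → F))
    (hD : D = Submodule.span F {w | ∃ c₁ ∈ C₁, ∃ c₂ ∈ C₂,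
      w = fun p : Fin n₁ × Fin n₂ => c₁ p.1 * c₂ p.2}) :
    Module.finrank F D = k₁ * k₂ ∧
    (∀ c ∈ D, ∀ c' ∈ D, c ≠ 0 → c' ≠ 0 →
      {i | c i ≠ 0} ⊆ {i | c' i ≠ 0} → ∃ lam : F, lam ≠ 0 ∧ c' = lam • c) :=
  stmt_17_general F n₁ n₂ k₁ k₂ C₁ C₂ hk₁ hk₂ hmin₁ hmin₂ D hD
end

section
/- Let C be a linear code over F_q with minimum nonzero weight w_min and maximum weight w_max. If w_min / w_max > (q−1)/q, then C is minimal. -/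
/-! When `supp c ⊆ supp c'`, counting coordinate by coordinate gives
`∑_{a ∈ F} wt (c' - a • c) + wt c = q * wt c'`: a coordinate outside `supp c` contributes `q`,
one inside contributes `q - 1`, since exactly one `a` kills it. If `c'` is not a multiple of `c`,
every `c' - a • c` with `a ≠ 0` has weight at least `w_min`, and so does `c`; isolating the term
`a = 0` yields `q * w_min ≤ (q - 1) * wt c' ≤ (q - 1) * w_max`. -/

open Finset

section HammingWeightCounting

variable {F ι : Type*} [Field F] [Fintype F] [DecidableEq F] [Fintype ι]

theorem card_filter_sub_mul_ne_zero_add_ite (x y : F) :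
    #{a : F | x - a * y ≠ 0} + (if y ≠ 0 then 1 else 0) =
      Fintype.card F * if x ≠ 0 ∨ y ≠ 0 then 1 else 0 := by
  by_cases hy : y = 0
  · by_cases hx : x = 0 <;> simp [hx, hy]
  · have hroot : (univ.filter fun a : F => x - a * y ≠ 0) = univ.erase (x / y) := by
      ext a
      simp [sub_eq_zero, eq_div_iff hy, eq_comm]
    rw [hroot, card_erase_of_mem (mem_univ _), card_univ]
    simp only [hy, ne_eq, not_false_eq_true, if_true, or_true, mul_one]
    have := Fintype.card_pos (α := F)
    omega

theorem sum_hammingNorm_sub_smul_add_hammingNorm (x y : ι → F) :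
    ∑ a : F, hammingNorm (x - a • y) + hammingNorm y =
      Fintype.card F * #{i | x i ≠ 0 ∨ y i ≠ 0} := by
  simp only [hammingNorm, card_filter, Pi.sub_apply, Pi.smul_apply, smul_eq_mul]
  rw [sum_comm, ← sum_add_distrib, mul_sum]
  refine sum_congr rfl fun i _ => ?_
  rw [← card_filter]
  exact card_filter_sub_mul_ne_zero_add_ite (x i) (y i)

theorem sum_hammingNorm_sub_smul_add_hammingNorm_of_support_subset
    {x y : ι → F} (hsupp : ∀ i, y i ≠ 0 → x i ≠ 0) :
    ∑ a : F, hammingNorm (x - a • y) + hammingNorm y = Fintype.card F * hammingNorm x := by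
  rw [sum_hammingNorm_sub_smul_add_hammingNorm, hammingNorm]
  congr 2
  ext i
  simpa using hsupp i

theorem card_mul_add_hammingNorm_le_of_forall_ne_smul
    {C : Submodule F (ι → F)} {w : ℕ} (hw : ∀ x ∈ C, x ≠ 0 → w ≤ hammingNorm x)
    {c c' : ι → F} (hc : c ∈ C) (hc' : c' ∈ C) (hc0 : c ≠ 0)
    (hsupp : ∀ i, c i ≠ 0 → c' i ≠ 0) (hne : ∀ a : F, c' ≠ a • c) :
    Fintype.card F * w + hammingNorm c' ≤ Fintype.card F * hammingNorm c' := by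
  have hdiff : ∀ a : F, w ≤ hammingNorm (c' - a • c) := fun a =>
    hw _ (C.sub_mem hc' (C.smul_mem a hc)) (sub_ne_zero.mpr (hne a))
  have hrest : #(univ.erase (0 : F)) * w ≤ ∑ a ∈ univ.erase (0 : F), hammingNorm (c' - a • c) :=
    card_nsmul_le_sum _ _ _ fun a _ => hdiff a
  have hcard : #(univ.erase (0 : F)) + 1 = Fintype.card F := by
    rw [card_erase_of_mem (mem_univ _), card_univ]
    have := Fintype.card_pos (α := F)
    omega
  have hcount := sum_hammingNorm_sub_smul_add_hammingNorm_of_support_subset hsupp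
  rw [← add_sum_erase _ _ (mem_univ 0), zero_smul, sub_zero] at hcount
  have hcw := hw c hc hc0
  rw [← hcard] at hcount ⊢
  linarith

end HammingWeightCounting

/-- Ashikhmin–Barg: if `w_min / w_max > (q-1)/q` then the code is
minimal. -/
theorem stmt_18 (F : Type) [Field F] [Fintype F] [DecidableEq F]
    (q : ℕ) (hq : q = Fintype.card F)
    (n : ℕ) (C : Submodule F (Fin n → F))
    (wmin wmax : ℕ)
    (hmin : IsLeast {w : ℕ | ∃ c ∈ C, c ≠ 0 ∧ hammingNorm c = w} wmin)
    (hmax : IsGreatest {w : ℕ | ∃ c ∈ C, c ≠ 0 ∧ hammingNorm c = w} wmax)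
    (hratio : ((q : ℚ) - 1) / (q : ℚ) < (wmin : ℚ) / (wmax : ℚ)) :
    ∀ c ∈ C, ∀ c' ∈ C, c ≠ 0 → c' ≠ 0 →
      {i | c i ≠ 0} ⊆ {i | c' i ≠ 0} → ∃ lam : F, lam ≠ 0 ∧ c' = lam • c := by
  intro c hc c' hc' hc0 hc'0 hsupp
  by_contra! hmult
  have hne : ∀ a : F, c' ≠ a • c := fun a => by
    rcases eq_or_ne a 0 with rfl | ha
    · simpa using hc'0
    · exact hmult a ha
  have hbound := card_mul_add_hammingNorm_le_of_forall_ne_smul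
    (fun x hx hx0 => hmin.2 ⟨x, hx, hx0, rfl⟩) hc hc' hc0 (fun _ hi => hsupp hi) hne
  have hc'max : hammingNorm c' ≤ wmax := hmax.2 ⟨c', hc', hc'0, rfl⟩
  have hc'pos : 0 < hammingNorm c' := hammingNorm_pos_iff.mpr hc'0
  rw [← hq] at hbound
  have hq1 : (1 : ℚ) ≤ q := by rw [hq]; exact_mod_cast Fintype.card_pos
  rw [div_lt_div_iff₀ (by linarith) (by exact_mod_cast hc'pos.trans_le hc'max)] at hratio
  have hbound' : (q : ℚ) * wmin + hammingNorm c' ≤ q * hammingNorm c' := by exact_mod_cast hbound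
  have hc'max' : (hammingNorm c' : ℚ) ≤ wmax := by exact_mod_cast hc'max
  nlinarith [mul_le_mul_of_nonneg_left hc'max' (sub_nonneg.mpr hq1)]
end
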